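/- arXiv:2303.11053 — 5 statements merged into one kernel-verified Lean document; each statement's English description precedes it below -/
import Mathlib

section
/- In a bipartite graph between agents and categories where all edges incident to an agent a have the same positive weight w(a), every maximum-weight b-matching of size at most s is also a maximum-size b-matching among those of size at most s. -/
/-!
Agent sets of b-matchings satisfy the matroid augmentation property: if `M` and `M'` are
b-matchings with `|M| < |M'|`, some b-matching covers exactly the agents of `M` plus one more.
By induction on `|M|`: take an agent `a₀` matched by `M'` to `c` but unmatched by `M`. If `c` is
full in `M`, some `(a₁, c) ∈ M` is not in `M'`; remove it from `M` and `(a₀, c)` from `M'`, lower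
`b c` by one, augment, and then add back `(a₁, c)` or, if `a₁` is covered again, `(a₀, c)`.
Since an edge's weight depends only on its agent and is positive, that b-matching is strictly
heavier than `M` and no larger than `M'`, so a maximum-weight `M` cannot be beaten in size.
-/

/-- A b-matching in the bipartite graph with edge set `E` between agents `A`
and categories `C`: each agent matched at most once, each category `c`
matched at most `b c` times. -/
def IsBMatching {A C : Type*} [DecidableEq A] [DecidableEq C]
    (E M : Finset (A × C)) (b : C → ℕ) : Prop :=
  M ⊆ E ∧ (∀ a : A, (M.filter (fun e => e.1 = a)).card ≤ 1) ∧
    (∀ c : C, (M.filter (fun e => e.2 = c)).card ≤ b c)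

open Finset

namespace IsBMatching

variable {A C : Type*} [DecidableEq A] [DecidableEq C] {E M : Finset (A × C)} {b b' : C → ℕ}

theorem injOn_fst (hM : IsBMatching E M b) : Set.InjOn Prod.fst (M : Set (A × C)) :=
  fun e he f hf hef =>
    card_le_one.mp (hM.2.1 e.1) e (mem_filter.mpr ⟨he, rfl⟩) f (mem_filter.mpr ⟨hf, hef.symm⟩)

theorem card_image_fst (hM : IsBMatching E M b) : (M.image Prod.fst).card = M.card :=
  card_image_of_injOn hM.injOn_fst

theorem sum_image_fst {β : Type*} [AddCommMonoid β] (hM : IsBMatching E M b) (f : A → β) :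
    ∑ a ∈ M.image Prod.fst, f a = ∑ e ∈ M, f e.1 :=
  sum_image hM.injOn_fst

theorem image_fst_erase (hM : IsBMatching E M b) {e : A × C} (he : e ∈ M) :
    (M.erase e).image Prod.fst = (M.image Prod.fst).erase e.1 := by
  ext a
  simp only [mem_image, mem_erase]
  constructor
  · rintro ⟨f, ⟨hfe, hf⟩, rfl⟩
    exact ⟨fun h => hfe (hM.injOn_fst hf he h), f, hf, rfl⟩
  · rintro ⟨hae, f, hf, rfl⟩
    exact ⟨f, ⟨by rintro rfl; exact hae rfl, hf⟩, rfl⟩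

theorem mono (hM : IsBMatching E M b) (hb : b ≤ b') : IsBMatching E M b' :=
  ⟨hM.1, hM.2.1, fun c => (hM.2.2 c).trans (hb c)⟩

theorem erase (hM : IsBMatching E M b) {e : A × C} (he : e ∈ M) :
    IsBMatching E (M.erase e) (Function.update b e.2 (b e.2 - 1)) := by
  have hsub (p : A × C → Prop) [DecidablePred p] : (M.erase e).filter p ⊆ M.filter p :=
    filter_subset_filter _ (erase_subset _ _)
  refine ⟨(erase_subset _ _).trans hM.1, fun a => (card_le_card (hsub _)).trans (hM.2.1 a),
    fun c => ?_⟩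
  rcases eq_or_ne c e.2 with rfl | hc
  · have he' : e ∈ M.filter (fun f => f.2 = e.2) := mem_filter.mpr ⟨he, rfl⟩
    rw [filter_erase, card_erase_of_mem he', Function.update_self]
    exact Nat.sub_le_sub_right (hM.2.2 _) 1
  · rw [Function.update_of_ne hc]
    exact (card_le_card (hsub _)).trans (hM.2.2 c)

theorem insert (hM : IsBMatching E M b) {a : A} {c : C} (hE : (a, c) ∈ E)
    (ha : a ∉ M.image Prod.fst) (hc : (M.filter (fun e => e.2 = c)).card < b c) :
    IsBMatching E (insert (a, c) M) b := by
  refine ⟨insert_subset hE hM.1, fun a' => ?_, fun c' => ?_⟩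
  · rw [filter_insert]
    split_ifs with h
    · have hempty : M.filter (fun e => e.1 = a') = ∅ :=
        filter_eq_empty_iff.mpr fun e he hea => ha (mem_image.mpr ⟨e, he, hea.trans h.symm⟩)
      simp [hempty]
    · exact hM.2.1 a'
  · rw [filter_insert]
    split_ifs with h
    · subst h
      exact (card_insert_le _ _).trans hc
    · exact hM.2.2 c'

theorem exists_mem_notMem_of_le_card_filter {M' : Finset (A × C)} {a₀ : A} {c : C}
    (hM' : IsBMatching E M' b) (hsat : b c ≤ (M.filter (fun e => e.2 = c)).card)
    (he₀ : (a₀, c) ∈ M') (he₀M : (a₀, c) ∉ M) : ∃ a₁, (a₁, c) ∈ M ∧ (a₁, c) ∉ M' := by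
  by_contra! hsub
  have hsubset : M.filter (fun e => e.2 = c) ⊆ M'.filter (fun e => e.2 = c) := by
    rintro ⟨a₁, c'⟩ h
    obtain ⟨hmem, hc' : c' = c⟩ := mem_filter.mp h
    subst hc'
    exact mem_filter.mpr ⟨hsub a₁ hmem, rfl⟩
  have hssub : M.filter (fun e => e.2 = c) ⊂ M'.filter (fun e => e.2 = c) :=
    (ssubset_iff_of_subset hsubset).mpr
      ⟨(a₀, c), mem_filter.mpr ⟨he₀, rfl⟩, fun h => he₀M (mem_filter.mp h).1⟩
  exact (hsat.trans_lt (card_lt_card hssub)).not_ge (hM'.2.2 c)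

theorem exists_image_fst_eq_insert {M M' : Finset (A × C)} {b : C → ℕ}
    (hM : IsBMatching E M b) (hM' : IsBMatching E M' b) (hlt : M.card < M'.card) :
    ∃ N, IsBMatching E N b ∧
      ∃ a ∉ M.image Prod.fst, N.image Prod.fst = Insert.insert a (M.image Prod.fst) := by
  obtain ⟨a₀, ha₀M', ha₀M⟩ := exists_mem_notMem_of_card_lt_card
    (hM.card_image_fst.trans_lt (hlt.trans_eq hM'.card_image_fst.symm))
  obtain ⟨⟨a₀, c⟩, he₀, rfl⟩ := mem_image.mp ha₀M'
  by_cases hroom : (M.filter (fun e => e.2 = c)).card < b c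
  · exact ⟨_, hM.insert (hM'.1 he₀) ha₀M hroom, _, ha₀M, image_insert _ _ _⟩
  obtain ⟨a₁, he₁, he₁M'⟩ :=
    hM'.exists_mem_notMem_of_le_card_filter (not_lt.mp hroom) he₀
      (fun h => ha₀M (mem_image_of_mem _ h))
  obtain ⟨N₁, hN₁, a, haM₁, hN₁M₁⟩ :=
    exists_image_fst_eq_insert (hM.erase he₁) (hM'.erase (e := (a₀, c)) he₀)
    (by
      rw [card_erase_of_mem he₁, card_erase_of_mem he₀]
      have := card_pos.mpr ⟨_, he₁⟩
      omega)
  rw [hM.image_fst_erase he₁] at haM₁ hN₁M₁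
  have he₁c : (a₁, c) ∈ M.filter (fun e => e.2 = c) := mem_filter.mpr ⟨he₁, rfl⟩
  have hbc : 0 < b c := (card_pos.mpr ⟨_, he₁c⟩).trans_le (hM.2.2 c)
  have hN₁room : (N₁.filter (fun e => e.2 = c)).card < b c :=
    (hN₁.2.2 c).trans_lt (by simpa using Nat.sub_lt hbc one_pos)
  have hN₁b : IsBMatching E N₁ b := hN₁.mono (update_le_self_iff.mpr (Nat.sub_le _ _))
  have ha₁M : a₁ ∈ M.image Prod.fst := mem_image_of_mem _ he₁
  rcases eq_or_ne a a₁ with rfl | ha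
  · rw [insert_erase ha₁M] at hN₁M₁
    exact ⟨_, hN₁b.insert (hM'.1 he₀) (hN₁M₁ ▸ ha₀M) hN₁room, _, ha₀M,
      by rw [image_insert, hN₁M₁]⟩
  · have ha₁N₁ : a₁ ∉ N₁.image Prod.fst := by
      rw [hN₁M₁, mem_insert, mem_erase]
      exact fun h => h.elim (ha ∘ Eq.symm) (fun h => h.1 rfl)
    exact ⟨_, hN₁b.insert (hM.1 he₁) ha₁N₁ hN₁room, a, fun h => haM₁ (mem_erase.mpr ⟨ha, h⟩),
      by rw [image_insert, hN₁M₁, insert_comm, insert_erase ha₁M]⟩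
termination_by M.card
decreasing_by exact card_erase_lt_of_mem he₁

end IsBMatching

theorem maxWeight_is_maxSize_general {A C : Type*} [DecidableEq A] [DecidableEq C]
    (E M : Finset (A × C)) (b : C → ℕ) (w : A → ℝ) (s : ℕ)
    (hw : ∀ a, 0 < w a)
    (hM : IsBMatching E M b)
    (hmaxW : ∀ M', IsBMatching E M' b → M'.card ≤ s →
      (∑ e ∈ M', w e.1) ≤ ∑ e ∈ M, w e.1) :
    ∀ M', IsBMatching E M' b → M'.card ≤ s → M'.card ≤ M.card := by
  intro M' hM' hM's
  by_contra! hlt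
  obtain ⟨N, hN, a, haM, hNM⟩ := hM.exists_image_fst_eq_insert hM' hlt
  have hNcard : N.card = M.card + 1 := by
    rw [← hN.card_image_fst, hNM, card_insert_of_notMem haM, hM.card_image_fst]
  have hNweight : ∑ e ∈ N, w e.1 = w a + ∑ e ∈ M, w e.1 := by
    rw [← hN.sum_image_fst, hNM, sum_insert haM, hM.sum_image_fst]
  linarith [hmaxW N hN (by omega), hw a]

/-- If all edges incident to an agent `a` have the same positive weight `w a`,
then every maximum-weight b-matching of size at most `s` is also a
maximum-size b-matching among those of size at most `s`. -/
theorem maxWeight_is_maxSize {A C : Type*} [DecidableEq A] [DecidableEq C]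
    (E M : Finset (A × C)) (b : C → ℕ) (w : A → ℝ) (s : ℕ)
    (hw : ∀ a, 0 < w a)
    (hM : IsBMatching E M b) (hMs : M.card ≤ s)
    (hmaxW : ∀ M', IsBMatching E M' b → M'.card ≤ s →
      (∑ e ∈ M', w e.1) ≤ ∑ e ∈ M, w e.1) :
    ∀ M', IsBMatching E M' b → M'.card ≤ s → M'.card ≤ M.card :=
  maxWeight_is_maxSize_general E M b w s hw hM hmaxW
end

section
/- Let M be a maximum-weight matching of size at most s in a bipartite graph where all edges incident to agent a have weight w(a) > 0, with |M| = s. If ρ is an M-augmenting path from an unmatched agent a_1 to an unsaturated category, then every edge e ∈ M satisfies w(e) ≥ w(a_1); equivalently, w(a_1) is at most the minimum edge weight in M. -/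
/-- An `M`-augmenting path: alternating non-matching / matching edges,
starting at an agent unmatched in `M` and ending at a category with
fewer than `b c` matched edges. -/
structure AugPath {A C : Type*} [DecidableEq A] [DecidableEq C]
    (E M : Finset (A × C)) (b : C → ℕ) where
  k : ℕ
  a : Fin (k + 1) → A
  c : Fin (k + 1) → C
  injA : Function.Injective a
  injC : Function.Injective c
  edgeNew : ∀ i, (a i, c i) ∈ E ∧ (a i, c i) ∉ M
  edgeMatch : ∀ i : Fin k, (a i.succ, c i.castSucc) ∈ M
  startFree : ∀ e ∈ M, e.1 ≠ a 0
  endSlack : (M.filter (fun e => e.2 = c (Fin.last k))).card < b (c (Fin.last k))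

/-!
Suppose some `e ∈ M` had `w e.1 < w (ρ.a 0)`. The matching `M.erase e` still has an augmenting path
starting at `ρ.a 0`: if `e` lies on `ρ` it frees its category, and `ρ` can be cut there. Switching
`M.erase e` along that path gives a b-matching of size `|M| = s` and weight
`w(M) - w e.1 + w (ρ.a 0) > w(M)`, contradicting maximality.
-/

open Finset Function

theorem card_filter_union_image_le {ι α β : Type*} [Fintype ι] [DecidableEq α] [DecidableEq β]
    (f : α → β) {g : ι → α} (hg : Injective (f ∘ g)) (S : Finset α) {v : β} {n : ℕ}
    (hS : (S.filter (f · = v)).card ≤ n)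
    (hS' : ∀ i, f (g i) = v → (S.filter (f · = v)).card < n) :
    ((S ∪ univ.image g).filter (f · = v)).card ≤ n := by
  rw [filter_union]
  refine (card_union_le _ _).trans ?_
  by_cases hv : ∃ i, f (g i) = v
  · obtain ⟨i, hi⟩ := hv
    have hg1 : ((univ.image g).filter (f · = v)).card ≤ 1 := by
      refine card_le_one.2 ?_
      simp only [mem_filter, mem_image, mem_univ, true_and]
      rintro _ ⟨⟨i₁, rfl⟩, h₁⟩ _ ⟨⟨i₂, rfl⟩, h₂⟩
      rw [hg (h₁.trans h₂.symm : (f ∘ g) i₁ = (f ∘ g) i₂)]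
    have := hS' i hi
    omega
  · push Not at hv
    have hempty : (univ.image g).filter (f · = v) = ∅ := by simpa [filter_eq_empty_iff] using hv
    rwa [hempty, card_empty, add_zero]

theorem card_filter_sdiff_lt {α β : Type*} [DecidableEq α] [DecidableEq β] (f : α → β)
    {M P : Finset α} {m : α} (hmM : m ∈ M) (hmP : m ∈ P) :
    ((M \ P).filter (f · = f m)).card < (M.filter (f · = f m)).card :=
  card_lt_card <| (ssubset_iff_of_subset (filter_subset_filter _ sdiff_subset)).2
    ⟨m, mem_filter.2 ⟨hmM, rfl⟩, fun h => (mem_sdiff.1 (mem_filter.1 h).1).2 hmP⟩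

section

variable {A C : Type*} [DecidableEq A] [DecidableEq C] {E M : Finset (A × C)} {b : C → ℕ}

theorem IsBMatching.mono_s11 {M₀ : Finset (A × C)} (hM : IsBMatching E M b) (h : M₀ ⊆ M) :
    IsBMatching E M₀ b :=
  ⟨h.trans hM.1, fun a => (card_le_card (filter_subset_filter _ h)).trans (hM.2.1 a),
    fun c => (card_le_card (filter_subset_filter _ h)).trans (hM.2.2 c)⟩

namespace AugPath

variable (ρ : AugPath E M b)

def newEdge (i : Fin (ρ.k + 1)) : A × C := (ρ.a i, ρ.c i)

def matchEdge (i : Fin ρ.k) : A × C := (ρ.a i.succ, ρ.c i.castSucc)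

theorem newEdge_injective : Injective ρ.newEdge :=
  fun _ _ h => ρ.injA (congrArg Prod.fst h)

theorem matchEdge_injective : Injective ρ.matchEdge :=
  fun _ _ h => Fin.succ_injective _ (ρ.injA (congrArg Prod.fst h))

def newEdges : Finset (A × C) := univ.image ρ.newEdge

def matchEdges : Finset (A × C) := univ.image ρ.matchEdge

theorem matchEdge_mem_matchEdges (i : Fin ρ.k) : ρ.matchEdge i ∈ ρ.matchEdges :=
  mem_image_of_mem _ (mem_univ i)

theorem matchEdges_subset : ρ.matchEdges ⊆ M := by
  rintro _ hx
  obtain ⟨i, -, rfl⟩ := mem_image.1 hx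
  exact ρ.edgeMatch i

theorem disjoint_newEdges : Disjoint M ρ.newEdges := by
  refine disjoint_right.2 fun x hx => ?_
  obtain ⟨i, -, rfl⟩ := mem_image.1 hx
  exact (ρ.edgeNew i).2

theorem card_matchEdges : ρ.matchEdges.card = ρ.k := by
  rw [matchEdges, card_image_of_injective _ ρ.matchEdge_injective, card_univ, Fintype.card_fin]

theorem card_newEdges : ρ.newEdges.card = ρ.k + 1 := by
  rw [newEdges, card_image_of_injective _ ρ.newEdge_injective, card_univ, Fintype.card_fin]

def augment : Finset (A × C) := (M \ ρ.matchEdges) ∪ ρ.newEdges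

theorem card_augment : ρ.augment.card = M.card + 1 := by
  have hk : ρ.k ≤ M.card := ρ.card_matchEdges ▸ card_le_card ρ.matchEdges_subset
  rw [augment, card_union_of_disjoint (ρ.disjoint_newEdges.mono_left sdiff_subset),
    card_sdiff_of_subset ρ.matchEdges_subset, card_matchEdges, card_newEdges]
  omega

theorem sum_augment {β : Type*} [AddCommGroup β] (w : A → β) :
    ∑ e ∈ ρ.augment, w e.1 = ∑ e ∈ M, w e.1 + w (ρ.a 0) := by
  rw [augment, sum_union (ρ.disjoint_newEdges.mono_left sdiff_subset),
    sum_sdiff_eq_sub ρ.matchEdges_subset, matchEdges, newEdges,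
    sum_image fun _ _ _ _ h => ρ.matchEdge_injective h,
    sum_image fun _ _ _ _ h => ρ.newEdge_injective h, Fin.sum_univ_succ]
  simp only [newEdge, matchEdge]
  abel

theorem isBMatching_augment (hM : IsBMatching E M b) : IsBMatching E ρ.augment b := by
  refine ⟨union_subset (sdiff_subset.trans hM.1) ?_, fun x => ?_, fun y => ?_⟩
  · rintro _ hx
    obtain ⟨i, -, rfl⟩ := mem_image.1 hx
    exact (ρ.edgeNew i).1
  · refine card_filter_union_image_le Prod.fst (g := ρ.newEdge) ρ.injA _
      ((card_le_card (filter_subset_filter _ sdiff_subset)).trans (hM.2.1 x)) ?_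
    rintro i rfl
    cases i using Fin.cases with
    | zero =>
      rw [Nat.lt_one_iff, card_eq_zero, filter_eq_empty_iff]
      exact fun e he => ρ.startFree e (mem_sdiff.1 he).1
    | succ l =>
      exact (card_filter_sdiff_lt Prod.fst (ρ.edgeMatch l)
        (ρ.matchEdge_mem_matchEdges l)).trans_le (hM.2.1 _)
  · refine card_filter_union_image_le Prod.snd (g := ρ.newEdge) ρ.injC _
      ((card_le_card (filter_subset_filter _ sdiff_subset)).trans (hM.2.2 y)) ?_
    rintro i rfl
    cases i using Fin.lastCases with
    | last => exact (card_le_card (filter_subset_filter _ sdiff_subset)).trans_lt ρ.endSlack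
    | cast l =>
      exact (card_filter_sdiff_lt Prod.snd (ρ.edgeMatch l)
        (ρ.matchEdge_mem_matchEdges l)).trans_le (hM.2.2 _)

def take (j : ℕ) (hj : j ≤ ρ.k) {M₀ : Finset (A × C)} (hsub : M₀ ⊆ M)
    (hmatch : ∀ i : Fin ρ.k, (i : ℕ) < j → ρ.matchEdge i ∈ M₀)
    (hslack : (M₀.filter (·.2 = ρ.c ⟨j, Nat.lt_succ_of_le hj⟩)).card
      < b (ρ.c ⟨j, Nat.lt_succ_of_le hj⟩)) :
    AugPath E M₀ b where
  k := j
  a := ρ.a ∘ Fin.castLE (Nat.succ_le_succ hj)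
  c := ρ.c ∘ Fin.castLE (Nat.succ_le_succ hj)
  injA := ρ.injA.comp (Fin.castLE_injective _)
  injC := ρ.injC.comp (Fin.castLE_injective _)
  edgeNew _ := ⟨(ρ.edgeNew _).1, fun h => (ρ.edgeNew _).2 (hsub h)⟩
  edgeMatch i := hmatch (Fin.castLE hj i) i.isLt
  startFree e he := ρ.startFree e (hsub he)
  endSlack := hslack

theorem exists_erase_start_eq (hM : IsBMatching E M b) {e : A × C} (he : e ∈ M) :
    ∃ ρ' : AugPath E (M.erase e) b, ρ'.a 0 = ρ.a 0 := by
  by_cases hon : ∃ i, ρ.matchEdge i = e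
  · obtain ⟨i, rfl⟩ := hon
    have hmatch : ∀ l : Fin ρ.k, (l : ℕ) < i → ρ.matchEdge l ∈ M.erase (ρ.matchEdge i) :=
      fun l hl => mem_erase.2
        ⟨fun h => hl.ne (congrArg Fin.val (ρ.matchEdge_injective h)), ρ.edgeMatch l⟩
    refine ⟨ρ.take i i.isLt.le (erase_subset _ _) hmatch ?_, rfl⟩
    rw [filter_erase]
    refine (card_erase_lt_of_mem ?_).trans_le (hM.2.2 _)
    exact mem_filter.2 ⟨he, rfl⟩
  · push Not at hon
    refine ⟨ρ.take ρ.k le_rfl (erase_subset _ _)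
      (fun l _ => mem_erase.2 ⟨hon l, ρ.edgeMatch l⟩) ?_, rfl⟩
    exact (card_le_card (filter_subset_filter _ (erase_subset _ _))).trans_lt ρ.endSlack

end AugPath

end

theorem augpath_start_min_weight_general {A C : Type*} [DecidableEq A] [DecidableEq C]
    (E M : Finset (A × C)) (b : C → ℕ) (w : A → ℝ) (s : ℕ)
    (hM : IsBMatching E M b) (hMs : M.card = s)
    (hmaxW : ∀ M', IsBMatching E M' b → M'.card ≤ s →
      (∑ e ∈ M', w e.1) ≤ ∑ e ∈ M, w e.1)
    (ρ : AugPath E M b) :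
    ∀ e ∈ M, w (ρ.a 0) ≤ w e.1 := by
  intro e he
  obtain ⟨ρ', hstart⟩ := ρ.exists_erase_start_eq hM he
  have hcard : ρ'.augment.card = s := by
    rw [ρ'.card_augment, card_erase_add_one he, hMs]
  have hle := hmaxW _ (ρ'.isBMatching_augment (hM.mono_s11 (erase_subset e M))) hcard.le
  rw [ρ'.sum_augment, sum_erase_eq_sub he, hstart] at hle
  linarith

/-- Let `M` be a maximum-weight b-matching of size at most `s`, with
`|M| = s` and all edges at agent `a` of weight `w a > 0`.  If `ρ` is an
`M`-augmenting path starting at the unmatched agent `ρ.a 0`, then every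
edge of `M` has weight at least `w (ρ.a 0)`. -/
theorem augpath_start_min_weight {A C : Type*} [DecidableEq A] [DecidableEq C]
    (E M : Finset (A × C)) (b : C → ℕ) (w : A → ℝ) (s : ℕ)
    (hw : ∀ a, 0 < w a)
    (hM : IsBMatching E M b) (hMs : M.card = s)
    (hmaxW : ∀ M', IsBMatching E M' b → M'.card ≤ s →
      (∑ e ∈ M', w e.1) ≤ ∑ e ∈ M, w e.1)
    (ρ : AugPath E M b) :
    ∀ e ∈ M, w (ρ.a 0) ≤ w e.1 :=
  augpath_start_min_weight_general E M b w s hM hMs hmaxW ρ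
end

section
/- Every integral flow of value at most the capacities in the layered day–category–agent network corresponds to a feasible vaccine allocation, and the negated cost of the flow equals the total utility of the allocation; consequently, a minimum-cost integral flow yields a maximum-utility allocation. -/
/-- An integral flow in the layered day–category–agent network of the vaccine
allocation reduction: source `s` → day nodes `d j` (capacity `supply j`) →
category-day nodes `c_{ij}` (capacity `quota c j`) → agent nodes `a`
(capacity-1 edges, present iff `elig a c j`, of cost `-α a · δ^j`) → sink `t`
(capacity-1 edges). -/
structure IntFlow {A C : Type*} [Fintype A] [Fintype C] (nD : ℕ)
    (supply : Fin nD → ℕ) (quota : C → Fin nD → ℕ)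
    (elig : A → C → Fin nD → Prop) where
  fsd : Fin nD → ℕ
  fdc : C → Fin nD → ℕ
  fca : C → Fin nD → A → ℕ
  fat : A → ℕ
  cap_sd : ∀ j, fsd j ≤ supply j
  cap_dc : ∀ c j, fdc c j ≤ quota c j
  cap_ca : ∀ c j a, fca c j a ≤ 1
  supp_ca : ∀ c j a, fca c j a ≠ 0 → elig a c j
  cap_at : ∀ a, fat a ≤ 1
  cons_d : ∀ j, fsd j = ∑ c, fdc c j
  cons_c : ∀ c j, fdc c j = ∑ a, fca c j a
  cons_a : ∀ a, (∑ c, ∑ j, fca c j a) = fat a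

/-- The cost of a flow: each unit on edge `(c_{ij}, a)` costs `-α a · δ^j`. -/
def flowCost {A C : Type*} [Fintype A] [Fintype C] {nD : ℕ}
    {supply : Fin nD → ℕ} {quota : C → Fin nD → ℕ}
    {elig : A → C → Fin nD → Prop} (α : A → ℝ) (δ : ℝ)
    (f : IntFlow nD supply quota elig) : ℝ :=
  ∑ c, ∑ j : Fin nD, ∑ a, (-(α a * δ ^ (j : ℕ))) * (f.fca c j a : ℝ)

/-- A feasible allocation: each agent gets at most one (category, day) pair,
respecting eligibility/availability, daily supplies and daily quotas. -/
def FeasibleAlloc {A C : Type*} [Fintype A] [Fintype C]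
    [DecidableEq A] [DecidableEq C] {nD : ℕ}
    (supply : Fin nD → ℕ) (quota : C → Fin nD → ℕ)
    (elig : A → C → Fin nD → Prop)
    (M : A → Option (C × Fin nD)) : Prop :=
  (∀ a c j, M a = some (c, j) → elig a c j) ∧
    (∀ j, (Finset.univ.filter (fun a : A => ∃ c, M a = some (c, j))).card ≤ supply j) ∧
    (∀ c j, (Finset.univ.filter (fun a : A => M a = some (c, j))).card ≤ quota c j)

/-- The total utility of an allocation: an agent matched on day `j` with
priority `α a` contributes `α a · δ^j`. -/
def allocUtility {A C : Type*} [Fintype A] [Fintype C] {nD : ℕ}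
    (α : A → ℝ) (δ : ℝ) (M : A → Option (C × Fin nD)) : ℝ :=
  ∑ a, ((M a).elim 0 fun p => α a * δ ^ (p.2 : ℕ))

/-!
An integral flow carries 0 or 1 on each edge `(c_{ij}, a)`, and since `(a, t)` has capacity 1,
each agent receives flow from at most one category-day node. Hence the flows on these edges are
exactly the indicator functions of allocations, and flow conservation turns the capacities of
`(s, d_j)` and `(d_j, c_{ij})` into the supply and quota constraints. Cost and utility are both
sums of `α a · δ^j` over the matched pairs, up to sign, so a minimum-cost flow yields a
maximum-utility allocation.
-/

open Finset

theorem card_filter_exists_eq_sum_card_filter {A C D : Type*} [Fintype A] [Fintype C]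
    [DecidableEq C] [DecidableEq D] (M : A → Option (C × D)) (j : D) :
    #{a | ∃ c, M a = some (c, j)} = ∑ c, #{a | M a = some (c, j)} := by
  simp only [card_filter]
  rw [sum_comm]
  refine sum_congr rfl fun a _ => ?_
  rcases M a with _ | ⟨c₀, j₀⟩
  · simp
  · by_cases hj : j₀ = j <;> simp [hj]

namespace IntFlow

variable {A C : Type*} [Fintype A] [Fintype C] {nD : ℕ} {supply : Fin nD → ℕ}
  {quota : C → Fin nD → ℕ} {elig : A → C → Fin nD → Prop}

theorem sum_fca_le_one (f : IntFlow nD supply quota elig) (a : A) :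
    ∑ p : C × Fin nD, f.fca p.1 p.2 a ≤ 1 := by
  rw [Fintype.sum_prod_type, f.cons_a a]
  exact f.cap_at a

/-- The choice is forced: by `sum_fca_le_one` at most one pair carries flow into `a`. -/
noncomputable def toAlloc (f : IntFlow nD supply quota elig) (a : A) : Option (C × Fin nD) :=
  if h : ∃ p : C × Fin nD, f.fca p.1 p.2 a ≠ 0 then some h.choose else none

theorem toAlloc_eq_some_iff (f : IntFlow nD supply quota elig) {a : A} {p : C × Fin nD} :
    f.toAlloc a = some p ↔ f.fca p.1 p.2 a ≠ 0 := by
  have hunique := sum_le_one_iff.mp (f.sum_fca_le_one a)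
  unfold toAlloc
  split_ifs with h
  · exact ⟨fun hp => Option.some.inj hp ▸ h.choose_spec,
      fun hp => congrArg some (hunique _ _ (mem_univ _) (mem_univ _) h.choose_spec hp).1⟩
  · simp only [not_exists, not_not] at h
    simp [h]

theorem fca_eq_ite_toAlloc [DecidableEq A] [DecidableEq C] (f : IntFlow nD supply quota elig)
    (c : C) (j : Fin nD) (a : A) :
    f.fca c j a = if f.toAlloc a = some (c, j) then 1 else 0 := by
  have := f.cap_ca c j a
  split_ifs with h <;> simp only [toAlloc_eq_some_iff] at h <;> omega

theorem flowCost_eq_neg_allocUtility [DecidableEq A] [DecidableEq C] (α : A → ℝ) (δ : ℝ)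
    (f : IntFlow nD supply quota elig) (M : A → Option (C × Fin nD))
    (hfM : ∀ c j a, f.fca c j a = if M a = some (c, j) then 1 else 0) :
    flowCost α δ f = -allocUtility α δ M := by
  have hagent : ∀ a, ∑ c, ∑ j : Fin nD,
      α a * δ ^ (j : ℕ) * ((if M a = some (c, j) then 1 else 0 : ℕ) : ℝ) = (M a).elim 0 (fun p => α a * δ ^ (p.2 : ℕ)) := fun a => by
    rcases M a with _ | ⟨c₀, j₀⟩ <;> simp [ite_and]
  simp only [flowCost, allocUtility, hfM, neg_mul, sum_neg_distrib, sum_comm_cycle, hagent]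

theorem feasibleAlloc_of_fca_eq_ite [DecidableEq A] [DecidableEq C]
    (f : IntFlow nD supply quota elig) (M : A → Option (C × Fin nD))
    (hfM : ∀ c j a, f.fca c j a = if M a = some (c, j) then 1 else 0) :
    FeasibleAlloc supply quota elig M := by
  have hdc : ∀ c j, #{a | M a = some (c, j)} = f.fdc c j := fun c j => by
    rw [f.cons_c, card_filter]
    simp only [hfM]
  refine ⟨fun a c j h => f.supp_ca c j a (by simp [hfM, h]), fun j => ?_, fun c j => ?_⟩
  · rw [card_filter_exists_eq_sum_card_filter]
    simp only [hdc, ← f.cons_d]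
    exact f.cap_sd j
  · exact hdc c j ▸ f.cap_dc c j

end IntFlow

namespace FeasibleAlloc

variable {A C : Type*} [Fintype A] [Fintype C] [DecidableEq A] [DecidableEq C] {nD : ℕ}
  {supply : Fin nD → ℕ} {quota : C → Fin nD → ℕ} {elig : A → C → Fin nD → Prop}

def toFlow {M : A → Option (C × Fin nD)} (hM : FeasibleAlloc supply quota elig M) :
    IntFlow nD supply quota elig where
  fsd j := #{a | ∃ c, M a = some (c, j)}
  fdc c j := #{a | M a = some (c, j)}
  fca c j a := if M a = some (c, j) then 1 else 0
  fat a := if (M a).isSome then 1 else 0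
  cap_sd := hM.2.1
  cap_dc := hM.2.2
  cap_ca c j a := by split_ifs <;> simp
  supp_ca c j a h := hM.1 a c j (by simpa using h)
  cap_at a := by split_ifs <;> simp
  cons_d j := card_filter_exists_eq_sum_card_filter M j
  cons_c c j := card_filter _ _
  cons_a a := by
    rcases M a with _ | ⟨c₀, j₀⟩ <;> simp [ite_and]

theorem flowCost_toFlow (α : A → ℝ) (δ : ℝ) {M : A → Option (C × Fin nD)}
    (hM : FeasibleAlloc supply quota elig M) :
    flowCost α δ hM.toFlow = -allocUtility α δ M :=
  hM.toFlow.flowCost_eq_neg_allocUtility α δ M fun _ _ _ => rfl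

end FeasibleAlloc

theorem minCostFlow_gives_maxUtility_general {A C : Type*} [Fintype A] [Fintype C]
    [DecidableEq A] [DecidableEq C] (nD : ℕ)
    (supply : Fin nD → ℕ) (quota : C → Fin nD → ℕ)
    (elig : A → C → Fin nD → Prop)
    (α : A → ℝ) (δ : ℝ) :
    ∃ Φ : {M : A → Option (C × Fin nD) // FeasibleAlloc supply quota elig M} →
        IntFlow nD supply quota elig,
      ∃ Ψ : IntFlow nD supply quota elig →
          {M : A → Option (C × Fin nD) // FeasibleAlloc supply quota elig M},
        (∀ M : {M : A → Option (C × Fin nD) // FeasibleAlloc supply quota elig M},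
          flowCost α δ (Φ M) = -allocUtility α δ M.val) ∧
        (∀ f : IntFlow nD supply quota elig, allocUtility α δ (Ψ f).val = -flowCost α δ f) ∧
        (∀ f : IntFlow nD supply quota elig, (∀ f' : IntFlow nD supply quota elig, flowCost α δ f ≤ flowCost α δ f') →
          ∀ M' : A → Option (C × Fin nD), FeasibleAlloc supply quota elig M' →
            allocUtility α δ M' ≤ allocUtility α δ (Ψ f).val) := by
  have hcost (f : IntFlow nD supply quota elig) : flowCost α δ f = -allocUtility α δ f.toAlloc :=
    f.flowCost_eq_neg_allocUtility α δ _ f.fca_eq_ite_toAlloc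
  refine ⟨fun M => M.2.toFlow,
    fun f => ⟨f.toAlloc, f.feasibleAlloc_of_fca_eq_ite _ f.fca_eq_ite_toAlloc⟩,
    fun M => M.2.flowCost_toFlow α δ, fun f => by simp [hcost], fun f hmin M' hM' => ?_⟩
  have hle := hmin hM'.toFlow
  rw [hcost, hM'.flowCost_toFlow] at hle
  linarith

/-- Feasible allocations correspond to integral flows: there are maps between
feasible allocations and integral flows in the layered network under which
the negated flow cost equals the allocation utility; consequently a
minimum-cost integral flow yields a maximum-utility allocation. -/
theorem minCostFlow_gives_maxUtility {A C : Type*} [Fintype A] [Fintype C]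
    [DecidableEq A] [DecidableEq C] (nD : ℕ)
    (supply : Fin nD → ℕ) (quota : C → Fin nD → ℕ)
    (elig : A → C → Fin nD → Prop) [∀ a c j, Decidable (elig a c j)]
    (α : A → ℝ) (δ : ℝ) (hα : ∀ a, 0 < α a) (hδ0 : 0 < δ) (hδ1 : δ < 1) :
    ∃ Φ : {M : A → Option (C × Fin nD) // FeasibleAlloc supply quota elig M} →
        IntFlow nD supply quota elig,
      ∃ Ψ : IntFlow nD supply quota elig →
          {M : A → Option (C × Fin nD) // FeasibleAlloc supply quota elig M},
        (∀ M : {M : A → Option (C × Fin nD) // FeasibleAlloc supply quota elig M},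
          flowCost α δ (Φ M) = -allocUtility α δ M.val) ∧
        (∀ f : IntFlow nD supply quota elig, allocUtility α δ (Ψ f).val = -flowCost α δ f) ∧
        (∀ f : IntFlow nD supply quota elig, (∀ f' : IntFlow nD supply quota elig, flowCost α δ f ≤ flowCost α δ f') →
          ∀ M' : A → Option (C × Fin nD), FeasibleAlloc supply quota elig M' →
            allocUtility α δ M' ≤ allocUtility α δ (Ψ f).val) :=
  minCostFlow_gives_maxUtility_general nD supply quota elig α δ
end

section
/- In the greedy online algorithm, the set X_i of Type-2 agents matched by the optimal offline solution on day d_i satisfies |X_i| ≤ |Y_i|, where Y_i is the set of agents matched by the online algorithm on day d_i, under Model 1 (daily quotas only). -/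
theorem Finset.injOn_of_card_filter_le_one {α β : Type*} [DecidableEq β] (f : α → β)
    (P : Finset α) (h : ∀ y, (P.filter (fun x => f x = y)).card ≤ 1) : Set.InjOn f P :=
  fun x hx x' hx' hxx' =>
    Finset.card_le_one.1 (h (f x)) x (Finset.mem_filter.2 ⟨hx, rfl⟩) x'
      (Finset.mem_filter.2 ⟨hx', hxx'.symm⟩)

theorem IsBMatching.card_image_fst_s14 {A C : Type*} [DecidableEq A] [DecidableEq C]
    {E M : Finset (A × C)} {b : C → ℕ} (hM : IsBMatching E M b) :
    (M.image Prod.fst).card = M.card :=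
  Finset.card_image_of_injOn (Finset.injOn_of_card_filter_le_one Prod.fst M hM.2.1)

theorem type2_le_online_general {A C : Type*} [DecidableEq A] [DecidableEq C]
    (E M N : Finset (A × C)) (b : C → ℕ) (s : ℕ)
    (hM : IsBMatching E M b)
    (hN : IsBMatching E N b) (hNs : N.card ≤ s)
    (hmax : ∀ M', IsBMatching E M' b → M'.card ≤ s → M'.card ≤ M.card) :
    (N.image Prod.fst).card ≤ (M.image Prod.fst).card := by
  rw [hN.card_image_fst_s14, hM.card_image_fst_s14]
  exact hmax N hN hNs

/-- Model 1, day `d_i`: the online matching `M` is a maximum-size b-matching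
of size at most the daily supply `s` in the graph `H_i` (edge set `E` on the
pool of available, not-yet-matched agents, with daily quotas `b` as category
capacities); the optimal solution restricted to day `d_i` and to Type-2
agents gives a feasible b-matching `N` of size at most `s` in the same graph.
Then the set `X` of agents matched in `N` is no larger than the set `Y` of
agents matched in `M`. -/
theorem type2_le_online {A C : Type*} [DecidableEq A] [DecidableEq C]
    (E M N : Finset (A × C)) (b : C → ℕ) (s : ℕ)
    (hM : IsBMatching E M b) (hMs : M.card ≤ s)
    (hN : IsBMatching E N b) (hNs : N.card ≤ s)
    (hmax : ∀ M', IsBMatching E M' b → M'.card ≤ s → M'.card ≤ M.card) :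
    (N.image Prod.fst).card ≤ (M.image Prod.fst).card :=
  type2_le_online_general E M N b s hM hN hNs hmax
end

section
/- If a category c_k is an endpoint of an alternating path in M_i ⊕ N_i with strictly more N_i-edges than M_i-edges incident to it, the online algorithm for Model 2 runs with supply slack |M_i| < s_i, and M_i is a maximum-size b-matching under the capacities b_{i,k} = min(q_{i,k}, remaining overall quota), then category c_k must have exhausted its overall quota q_k in the online algorithm on or before day d_i. -/
/-- An alternating path in `M ⊕ N`, starting at an agent unmatched in `M`,
alternating between edges of `N \ M` and edges of `M \ N`, and ending at the
category `c (Fin.last k)` with an `N`-edge.  (It would be `M`-augmenting if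
its terminal category had spare capacity.) -/
structure PreAugPath {A C : Type*} [DecidableEq A] [DecidableEq C]
    (E M N : Finset (A × C)) where
  k : ℕ
  a : Fin (k + 1) → A
  c : Fin (k + 1) → C
  injA : Function.Injective a
  injC : Function.Injective c
  nEdge : ∀ i, (a i, c i) ∈ E ∧ (a i, c i) ∈ N ∧ (a i, c i) ∉ M
  mEdge : ∀ i : Fin k, (a i.succ, c i.castSucc) ∈ M ∧ (a i.succ, c i.castSucc) ∉ N
  startFree : ∀ e ∈ M, e.1 ≠ a 0

open Finset

theorem Finset.card_filter_sdiff_lt {α : Type*} [DecidableEq α] {s t : Finset α}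
    {p : α → Prop} [DecidablePred p] {x : α} (hs : x ∈ s) (ht : x ∈ t) (hp : p x) :
    ((s \ t).filter p).card < (s.filter p).card :=
  card_lt_card ⟨filter_subset_filter p sdiff_subset, fun h =>
    (mem_sdiff.1 (mem_filter.1 (h (mem_filter.2 ⟨hs, hp⟩))).1).2 ht⟩

namespace PreAugPath

variable {A C : Type*} [DecidableEq A] [DecidableEq C] {E M N : Finset (A × C)}
  (ρ : PreAugPath E M N)

def nEdges : Finset (A × C) := univ.image fun i => (ρ.a i, ρ.c i)

def mEdges : Finset (A × C) := univ.image fun i : Fin ρ.k => (ρ.a i.succ, ρ.c i.castSucc)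

/-- The symmetric difference `M Δ ρ`. -/
def augment : Finset (A × C) := M \ ρ.mEdges ∪ ρ.nEdges

theorem mem_nEdges {e : A × C} : e ∈ ρ.nEdges ↔ ∃ i, (ρ.a i, ρ.c i) = e := by
  simp [nEdges]

theorem mem_mEdges (i : Fin ρ.k) : (ρ.a i.succ, ρ.c i.castSucc) ∈ ρ.mEdges :=
  mem_image_of_mem _ (mem_univ i)

theorem mEdges_subset : ρ.mEdges ⊆ M := by
  intro e he
  obtain ⟨i, -, rfl⟩ := mem_image.1 he
  exact (ρ.mEdge i).1

theorem disjoint_nEdges : Disjoint M ρ.nEdges := by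
  refine disjoint_right.2 fun e he => ?_
  obtain ⟨i, rfl⟩ := ρ.mem_nEdges.1 he
  exact (ρ.nEdge i).2.2

theorem card_nEdges : ρ.nEdges.card = ρ.k + 1 := by
  rw [nEdges, card_image_of_injective _ fun i j h => ρ.injC (congrArg Prod.snd h),
    card_univ, Fintype.card_fin]

theorem card_mEdges : ρ.mEdges.card = ρ.k := by
  rw [mEdges, card_image_of_injective _ fun i j h =>
      Fin.castSucc_injective _ (ρ.injC (congrArg Prod.snd h)),
    card_univ, Fintype.card_fin]

theorem card_augment : ρ.augment.card = M.card + 1 := by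
  have hk : ρ.k ≤ M.card := ρ.card_mEdges ▸ card_le_card ρ.mEdges_subset
  rw [augment, card_union_of_disjoint (ρ.disjoint_nEdges.mono_left sdiff_subset),
    card_sdiff_of_subset ρ.mEdges_subset, ρ.card_mEdges, ρ.card_nEdges]
  omega

theorem augment_subset (hME : M ⊆ E) : ρ.augment ⊆ E := by
  refine union_subset (sdiff_subset.trans hME) fun e he => ?_
  obtain ⟨i, rfl⟩ := ρ.mem_nEdges.1 he
  exact (ρ.nEdge i).1

theorem card_filter_augment_le (p : A × C → Prop) [DecidablePred p] :
    (ρ.augment.filter p).card ≤ ((M \ ρ.mEdges).filter p).card + (ρ.nEdges.filter p).card := by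
  rw [augment, filter_union]
  exact card_union_le _ _

theorem card_filter_nEdges_eq_zero {p : A × C → Prop} [DecidablePred p]
    (hp : ∀ i, ¬ p (ρ.a i, ρ.c i)) : (ρ.nEdges.filter p).card = 0 := by
  refine card_eq_zero.2 (filter_eq_empty_iff.2 fun e he => ?_)
  obtain ⟨i, rfl⟩ := ρ.mem_nEdges.1 he
  exact hp i

theorem card_filter_nEdges_fst_le_one (x : A) : (ρ.nEdges.filter fun e => e.1 = x).card ≤ 1 := by
  refine card_le_one.2 fun e he f hf => ?_
  obtain ⟨⟨i, rfl⟩, hi⟩ := (mem_filter.1 he).imp_left ρ.mem_nEdges.1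
  obtain ⟨⟨j, rfl⟩, hj⟩ := (mem_filter.1 hf).imp_left ρ.mem_nEdges.1
  rw [ρ.injA (hi.trans hj.symm)]

theorem card_filter_nEdges_snd_le_one (x : C) : (ρ.nEdges.filter fun e => e.2 = x).card ≤ 1 := by
  refine card_le_one.2 fun e he f hf => ?_
  obtain ⟨⟨i, rfl⟩, hi⟩ := (mem_filter.1 he).imp_left ρ.mem_nEdges.1
  obtain ⟨⟨j, rfl⟩, hj⟩ := (mem_filter.1 hf).imp_left ρ.mem_nEdges.1
  rw [ρ.injC (hi.trans hj.symm)]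

/-- Each agent of the path trades its `M`-edge (none for the first one) for its `N`-edge. -/
theorem card_filter_augment_fst_le_one (hM : ∀ x : A, (M.filter fun e => e.1 = x).card ≤ 1)
    (x : A) : (ρ.augment.filter fun e => e.1 = x).card ≤ 1 := by
  have hle := ρ.card_filter_augment_le (fun e => e.1 = x)
  have hMx : ((M \ ρ.mEdges).filter fun e => e.1 = x).card ≤ 1 :=
    (card_le_card (filter_subset_filter _ sdiff_subset)).trans (hM x)
  by_cases hx : ∃ j, ρ.a j = x
  · obtain ⟨j, rfl⟩ := hx
    have hfree : ((M \ ρ.mEdges).filter fun e => e.1 = ρ.a j).card = 0 := by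
      rcases Fin.eq_zero_or_eq_succ j with rfl | ⟨i, rfl⟩
      · exact card_eq_zero.2 (filter_eq_empty_iff.2 fun e he =>
          ρ.startFree e (mem_sdiff.1 he).1)
      · have := card_filter_sdiff_lt (ρ.mEdge i).1 (ρ.mem_mEdges i) (p := fun e => e.1 = ρ.a i.succ) rfl
        have := hM (ρ.a i.succ)
        omega
    have := ρ.card_filter_nEdges_fst_le_one (ρ.a j)
    omega
  · push Not at hx
    have := ρ.card_filter_nEdges_eq_zero (p := fun e => e.1 = x) hx
    omega

/-- Each inner category of the path trades an `M`-edge for an `N`-edge; only the terminal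
category gains one, which is where its spare capacity is needed. -/
theorem card_filter_augment_snd_le {b : C → ℕ} (hM : ∀ x : C, (M.filter fun e => e.2 = x).card ≤ b x)
    (hlast : (M.filter fun e => e.2 = ρ.c (Fin.last ρ.k)).card < b (ρ.c (Fin.last ρ.k)))
    (x : C) : (ρ.augment.filter fun e => e.2 = x).card ≤ b x := by
  have hle := ρ.card_filter_augment_le (fun e => e.2 = x)
  have hMx : ((M \ ρ.mEdges).filter fun e => e.2 = x).card ≤ (M.filter fun e => e.2 = x).card :=
    card_le_card (filter_subset_filter _ sdiff_subset)
  by_cases hx : ∃ j, ρ.c j = x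
  · obtain ⟨j, rfl⟩ := hx
    have := ρ.card_filter_nEdges_snd_le_one (ρ.c j)
    rcases Fin.eq_castSucc_or_eq_last j with ⟨i, rfl⟩ | rfl
    · have := card_filter_sdiff_lt (ρ.mEdge i).1 (ρ.mem_mEdges i) (p := fun e => e.2 = ρ.c i.castSucc) rfl
      have := hM (ρ.c i.castSucc)
      omega
    · omega
  · push Not at hx
    have := ρ.card_filter_nEdges_eq_zero (p := fun e => e.2 = x) hx
    have := hM x
    omega

theorem isBMatching_augment {b : C → ℕ} (hM : IsBMatching E M b)
    (hlast : (M.filter fun e => e.2 = ρ.c (Fin.last ρ.k)).card < b (ρ.c (Fin.last ρ.k))) :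
    IsBMatching E ρ.augment b :=
  ⟨ρ.augment_subset hM.1, ρ.card_filter_augment_fst_le_one hM.2.1,
    ρ.card_filter_augment_snd_le hM.2.2 hlast⟩

theorem card_filter_last_eq_of_maximal {b : C → ℕ} {s : ℕ} (hM : IsBMatching E M b)
    (hMs : M.card < s) (hmax : ∀ M', IsBMatching E M' b → M'.card ≤ s → M'.card ≤ M.card) :
    (M.filter fun e => e.2 = ρ.c (Fin.last ρ.k)).card = b (ρ.c (Fin.last ρ.k)) := by
  refine le_antisymm (hM.2.2 _) (not_lt.1 fun hlast => ?_)
  have hbig := hmax _ (ρ.isBMatching_augment hM hlast) (by rw [ρ.card_augment]; omega)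
  rw [ρ.card_augment] at hbig
  omega

end PreAugPath

theorem overall_quota_exhausted_general {A C : Type*} [DecidableEq A] [DecidableEq C]
    (E M N : Finset (A × C)) (qd q used : C → ℕ) (s : ℕ)
    (cap : C → ℕ) (hcap : ∀ c, cap c = min (qd c) (q c - used c))
    (hused : ∀ c, used c ≤ q c)
    (hM : IsBMatching E M cap) (hMs : M.card < s)
    (hmax : ∀ M', IsBMatching E M' cap → M'.card ≤ s → M'.card ≤ M.card)
    (hNdaily : ∀ c : C, (N.filter (fun e => e.2 = c)).card ≤ qd c)
    (ρ : PreAugPath E M N) (ck : C) (hck : ck = ρ.c (Fin.last ρ.k))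
    (hdeg : (M.filter (fun e => e.2 = ck)).card < (N.filter (fun e => e.2 = ck)).card) :
    used ck + (M.filter (fun e => e.2 = ck)).card = q ck := by
  have hsat : (M.filter fun e => e.2 = ck).card = cap ck :=
    hck ▸ ρ.card_filter_last_eq_of_maximal hM hMs hmax
  have hdaily := hNdaily ck
  have := hused ck
  rw [hcap] at hsat
  omega

/-- Model 2, day `d_i`: the online b-matching `M` is maximum-size subject to
size cap `s` (with supply slack `|M| < s`) under category capacities
`cap c = min (qd c) (q c - used c)` — the minimum of the daily quota and the
remaining overall quota.  If the category `ck` is the endpoint of an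
alternating path in `M ⊕ N` and has strictly more `N`-edges than `M`-edges
incident to it (where the day-`i` optimal matching `N` respects the daily
quotas), then `ck` has exhausted its overall quota `q ck` on or before day
`d_i`: the previously used units plus today's `M`-allocations equal `q ck`. -/
theorem overall_quota_exhausted {A C : Type*} [DecidableEq A] [DecidableEq C]
    (E M N : Finset (A × C)) (qd q used : C → ℕ) (s : ℕ)
    (cap : C → ℕ) (hcap : ∀ c, cap c = min (qd c) (q c - used c))
    (hused : ∀ c, used c ≤ q c)
    (hM : IsBMatching E M cap) (hMs : M.card < s)
    (hmax : ∀ M', IsBMatching E M' cap → M'.card ≤ s → M'.card ≤ M.card)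
    (hNE : N ⊆ E)
    (hNagent : ∀ a : A, (N.filter (fun e => e.1 = a)).card ≤ 1)
    (hNdaily : ∀ c : C, (N.filter (fun e => e.2 = c)).card ≤ qd c)
    (ρ : PreAugPath E M N) (ck : C) (hck : ck = ρ.c (Fin.last ρ.k))
    (hdeg : (M.filter (fun e => e.2 = ck)).card < (N.filter (fun e => e.2 = ck)).card) :
    used ck + (M.filter (fun e => e.2 = ck)).card = q ck :=
  overall_quota_exhausted_general E M N qd q used s cap hcap hused hM hMs hmax hNdaily ρ ck hck hdeg
end
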